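/- Let C be a ℤ_p-chain complex with fundamental-domain bases as in the context. Let h ∈ H^i_d(C) be a torsion d-cohomology class and suppose h = [sφ]_d, where sφ is a cocycle of C*_d and the cochain φ ∈ C^i vanishes on t^kσ for all σ ∈ F_i and all 1 ≤ k ≤ p−1. Then h ≠ 0 if and only if there exist an integer n ≥ 2 and a chain c ∈ C_i lying in the ℤ-span of F_i such that s∂c ∈ n·C_{i−1} and φ(c) is not divisible by n (for such c one has φ(sc) = φ(c)). -/

import Mathlib

/-! A `d`-closed cochain `ψ` is `t`-invariant, so `ψ ∘ s = p • ψ`; as `s` does not change when a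
chain `s x` is replaced by its restriction `π (s x)` to the fundamental domain, `ψ x = ψ (π (s x))`.
Hence if `sφ = δψ` with `dψ = 0`, then for `c` in the span of `F_i` we get
`φ(c) = sφ(c) = ψ(π(s∂c))`, which is divisible by `n` as soon as `s∂c ∈ n·C_{i-1}`.
Conversely, if all these divisibilities hold, then `c ↦ φ(c)` on the span of `F_i` factors
along `c ↦ s∂c` through a functional `θ` on `C_{i-1}` (Smith normal form of the image), and
`sφ = δ(θ ∘ s)`. The case `n = 0`, i.e. `s∂c = 0`, is where torsion enters: some `k·sφ` is a
`d`-coboundary, so `k·φ(c) = 0`. -/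

/-- A `ℤ_p`-chain complex (in nonnegative degrees) whose degree-`n` chain group is the
finitely generated free ℤ-module with basis `{t^k σ : σ ∈ F n, 0 ≤ k ≤ p−1}`, i.e. the
free ℤ-module on `F n × ZMod p`; the action of `t` cyclically permutes the basis, and
commutes with the boundary. Equivalently, each chain group is a finitely generated free
`ℤ[ℤ/pℤ]`-module with the generator of `ℤ/pℤ` acting as `t`. -/
structure ZpFreeComplex (p : ℕ) where
  F : ℕ → Type
  fin : ∀ n, Fintype (F n)
  bd : ∀ n, ((F (n + 1) × ZMod p → ℤ) →+ (F n × ZMod p → ℤ))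
  bd_bd : ∀ n x, bd n (bd (n + 1) x) = 0
  bd_t : ∀ n (c : F (n + 1) × ZMod p → ℤ),
    bd n (fun z => c (z.1, z.2 - 1)) = fun z => bd n c (z.1, z.2 - 1)

namespace ZpFreeComplex

variable {p : ℕ} (X : ZpFreeComplex p)

/-- degree-`n` chains -/
abbrev Ch (n : ℕ) := X.F n × ZMod p → ℤ

/-- degree-`n` integral cochains -/
abbrev Co (n : ℕ) := (X.F n × ZMod p → ℤ) →+ ℤ

/-- the chain map `t^k` -/
def tCh (n k : ℕ) : X.Ch n →+ X.Ch n where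
  toFun c := fun z => c (z.1, z.2 - (k : ZMod p))
  map_zero' := rfl
  map_add' _ _ := rfl

/-- `s = 1 + t + ⋯ + t^{p−1}` on chains -/
def sCh (n : ℕ) : X.Ch n →+ X.Ch n := ∑ k ∈ Finset.range p, X.tCh n k

/-- `d = 1 − t` on chains -/
def dCh (n : ℕ) : X.Ch n →+ X.Ch n := AddMonoidHom.id _ - X.tCh n 1

/-- the cochain map `t^k`, `φ ↦ φ ∘ t^k` -/
def tCo (n k : ℕ) : X.Co n →+ X.Co n where
  toFun φ := φ.comp (X.tCh n k)
  map_zero' := by ext x; simp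
  map_add' _ _ := by ext x; simp

/-- `s = 1 + t + ⋯ + t^{p−1}` on cochains -/
def sCo (n : ℕ) : X.Co n →+ X.Co n where
  toFun φ := φ.comp (X.sCh n)
  map_zero' := by ext x; simp
  map_add' _ _ := by ext x; simp

/-- `d = 1 − t` on cochains -/
def dCo (n : ℕ) : X.Co n →+ X.Co n where
  toFun φ := φ.comp (X.dCh n)
  map_zero' := by ext x; simp
  map_add' _ _ := by ext x; simp

/-- the coboundary `δφ = φ ∘ ∂` -/
def cb (n : ℕ) : X.Co n →+ X.Co (n + 1) where
  toFun φ := φ.comp (X.bd n)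
  map_zero' := by ext x; simp
  map_add' _ _ := by ext x; simp

/-- the boundary out of degree `n` (the zero map in degree 0). -/
def bdFrom : ∀ n : ℕ, (X.Ch n →+ X.Ch (n - 1))
  | 0 => 0
  | (j + 1) => X.bd j

lemma tCh_one (n : ℕ) (c : X.Ch n) : X.tCh n 1 c = fun z => c (z.1, z.2 - 1) := by
  funext z
  simp [tCh]

lemma tCh_succ (n k : ℕ) (c : X.Ch n) :
    X.tCh n (k + 1) c = X.tCh n 1 (X.tCh n k c) := by
  funext z
  show c (z.1, z.2 - ((k + 1 : ℕ) : ZMod p)) = c (z.1, z.2 - ((1 : ℕ) : ZMod p) - ((k : ℕ) : ZMod p))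
  have h2 : z.2 - ((k + 1 : ℕ) : ZMod p) = z.2 - ((1 : ℕ) : ZMod p) - ((k : ℕ) : ZMod p) := by
    push_cast
    ring
  rw [h2]

lemma tCh_zero (n : ℕ) (c : X.Ch n) : X.tCh n 0 c = c := by
  funext z
  simp [tCh]

lemma bd_tCh (n k : ℕ) (c : X.Ch (n + 1)) :
    X.bd n (X.tCh (n + 1) k c) = X.tCh n k (X.bd n c) := by
  induction k with
  | zero => rw [tCh_zero, tCh_zero]
  | succ k ih =>
      rw [X.tCh_succ (n + 1) k c, X.tCh_succ n k (X.bd n c)]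
      rw [X.tCh_one (n + 1) (X.tCh (n + 1) k c)]
      rw [X.bd_t n (X.tCh (n + 1) k c)]
      rw [ih]
      rw [← X.tCh_one n (X.tCh n k (X.bd n c))]

lemma bd_sCh (n : ℕ) (c : X.Ch (n + 1)) :
    X.bd n (X.sCh (n + 1) c) = X.sCh n (X.bd n c) := by
  simp only [sCh, AddMonoidHom.finset_sum_apply, map_sum, bd_tCh]

lemma bd_dCh (n : ℕ) (c : X.Ch (n + 1)) :
    X.bd n (X.dCh (n + 1) c) = X.dCh n (X.bd n c) := by
  simp only [dCh, AddMonoidHom.sub_apply, AddMonoidHom.id_apply, map_sub, bd_tCh]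

end ZpFreeComplex

namespace ZpFreeComplex

variable {p : ℕ} (X : ZpFreeComplex p)

/-- cocycles of the `d`-cochain complex `C*_d = ker d ⊆ C*` -/
def dcocycles (n : ℕ) : AddSubgroup (X.Co n) := (X.dCo n).ker ⊓ (X.cb n).ker

/-- coboundaries of the `d`-cochain complex -/
def dcobds : ∀ n : ℕ, AddSubgroup (X.Co n)
  | 0 => ⊥
  | (j + 1) => AddSubgroup.map (X.cb j) ((X.dCo j).ker)

/-- the `d`-cohomology `H^n_d` -/
abbrev Hd (n : ℕ) := X.dcocycles n ⧸ (X.dcobds n).addSubgroupOf (X.dcocycles n)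

/-- the `d`-cohomology class `[φ]_d` of a cocycle of `C*_d` -/
def clsd (n : ℕ) (φ : X.Co n) (h : φ ∈ X.dcocycles n) : X.Hd n :=
  QuotientAddGroup.mk ⟨φ, h⟩

/-- cocycles of the `s`-cochain complex `C*_s = ker s ⊆ C*` -/
def scocycles (n : ℕ) : AddSubgroup (X.Co n) := (X.sCo n).ker ⊓ (X.cb n).ker

/-- coboundaries of the `s`-cochain complex -/
def scobds : ∀ n : ℕ, AddSubgroup (X.Co n)
  | 0 => ⊥
  | (j + 1) => AddSubgroup.map (X.cb j) ((X.sCo j).ker)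

/-- the `s`-cohomology `H^n_s` -/
abbrev Hs (n : ℕ) := X.scocycles n ⧸ (X.scobds n).addSubgroupOf (X.scocycles n)

/-- the `s`-cohomology class `[φ]_s` of a cocycle of `C*_s` -/
def clss (n : ℕ) (φ : X.Co n) (h : φ ∈ X.scocycles n) : X.Hs n :=
  QuotientAddGroup.mk ⟨φ, h⟩

/-- the boundary of the `d`-chain complex `C^d = ker d ⊆ C`, i.e. the restriction
of the boundary of `C`. -/
def bdD (n : ℕ) : ↥((X.dCh (n + 1)).ker) →+ ↥((X.dCh n).ker) :=
  AddMonoidHom.codRestrict ((X.bd n).comp (X.dCh (n + 1)).ker.subtype) ((X.dCh n).ker)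
    (fun x => by
      have hx : X.dCh (n + 1) (x : X.Ch (n + 1)) = 0 := x.2
      simp only [AddMonoidHom.mem_ker, AddMonoidHom.coe_comp, AddSubgroup.coe_subtype,
        Function.comp_apply]
      rw [← bd_dCh, hx, map_zero])

/-- the boundary of the `s`-chain complex `C^s = ker s ⊆ C`, i.e. the restriction
of the boundary of `C`. -/
def bdS (n : ℕ) : ↥((X.sCh (n + 1)).ker) →+ ↥((X.sCh n).ker) :=
  AddMonoidHom.codRestrict ((X.bd n).comp (X.sCh (n + 1)).ker.subtype) ((X.sCh n).ker)
    (fun x => by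
      have hx : X.sCh (n + 1) (x : X.Ch (n + 1)) = 0 := x.2
      simp only [AddMonoidHom.mem_ker, AddMonoidHom.coe_comp, AddSubgroup.coe_subtype,
        Function.comp_apply]
      rw [← bd_sCh, hx, map_zero])

lemma cb_dCo (n : ℕ) (φ : X.Co n) :
    X.cb n (X.dCo n φ) = X.dCo (n + 1) (X.cb n φ) := by
  ext x
  show (X.dCo n φ) (X.bd n x) = (X.cb n φ) (X.dCh (n + 1) x)
  show φ (X.dCh n (X.bd n x)) = φ (X.bd n (X.dCh (n + 1) x))
  rw [bd_dCh]

lemma cb_sCo (n : ℕ) (φ : X.Co n) :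
    X.cb n (X.sCo n φ) = X.sCo (n + 1) (X.cb n φ) := by
  ext x
  show φ (X.sCh n (X.bd n x)) = φ (X.bd n (X.sCh (n + 1) x))
  rw [bd_sCh]

/-- the coboundary of `C*_d`, i.e. the restriction of the coboundary of `C*`. -/
def cbD (n : ℕ) : ↥((X.dCo n).ker) →+ ↥((X.dCo (n + 1)).ker) :=
  AddMonoidHom.codRestrict ((X.cb n).comp (X.dCo n).ker.subtype) ((X.dCo (n + 1)).ker)
    (fun φ => by
      have hφ : X.dCo n (φ : X.Co n) = 0 := φ.2
      simp only [AddMonoidHom.mem_ker, AddMonoidHom.coe_comp, AddSubgroup.coe_subtype,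
        Function.comp_apply]
      rw [← cb_dCo, hφ, map_zero])

end ZpFreeComplex

open ZpFreeComplex

theorem AddMonoidHom.exists_comp_eq_of_forall_dvd {A ι : Type*} [AddCommGroup A] [Finite ι]
    (L : A →+ (ι → ℤ)) (f : A →+ ℤ)
    (hdvd : ∀ (n : ℕ) (a : A) (w : ι → ℤ), L a = (n : ℤ) • w → (n : ℤ) ∣ f a) :
    ∃ θ : (ι → ℤ) →+ ℤ, θ.comp L = f := by
  set L' := L.toIntLinearMap
  -- the case `n = 0`: `f` vanishes on `ker L`, so it descends to the range of `L`
  have hker : LinearMap.ker L' ≤ LinearMap.ker f.toIntLinearMap := fun a ha => by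
    rw [LinearMap.mem_ker] at ha ⊢
    exact zero_dvd_iff.mp (hdvd 0 a 0 (by rw [Nat.cast_zero, zero_smul]; exact ha))
  let g : LinearMap.range L' →ₗ[ℤ] ℤ :=
    (LinearMap.ker L').liftQ f.toIntLinearMap hker ∘ₗ L'.quotKerEquivRange.symm.toLinearMap
  have hg : ∀ a, g ⟨L' a, LinearMap.mem_range_self L' a⟩ = f a := fun a => by
    simp only [g, LinearMap.comp_apply, LinearEquiv.coe_coe,
      LinearMap.quotKerEquivRange_symm_apply_image, Submodule.mkQ_apply, Submodule.liftQ_apply]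
    rfl
  obtain ⟨n, bM, bN, e, d, hsnf⟩ := (LinearMap.range L').smithNormalForm (Pi.basisFun ℤ ι)
  have hd : ∀ j, d j ∣ g (bN j) := fun j => by
    obtain ⟨a, ha⟩ := (bN j).2
    rw [show bN j = ⟨L' a, LinearMap.mem_range_self L' a⟩ from Subtype.ext ha.symm, hg,
      ← Int.natAbs_dvd]
    refine hdvd _ a (Int.sign (d j) • bM (e j)) ?_
    rw [smul_smul, mul_comm, Int.sign_mul_natAbs, ← hsnf, ← ha]
    rfl
  let θ : (ι → ℤ) →ₗ[ℤ] ℤ := bM.constr ℤ (Function.extend e (fun j => g (bN j) / d j) 0)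
  have hθ : θ ∘ₗ (LinearMap.range L').subtype = g := bN.ext fun j => by
    rw [LinearMap.comp_apply, Submodule.subtype_apply, hsnf, map_smul, Module.Basis.constr_basis,
      e.injective.extend_apply, smul_eq_mul, Int.mul_ediv_cancel' (hd j)]
  refine ⟨θ.toAddMonoidHom, AddMonoidHom.ext fun a => ?_⟩
  have := LinearMap.congr_fun hθ ⟨L' a, LinearMap.mem_range_self L' a⟩
  rwa [hg] at this

theorem ZMod.sum_range_natCast {n : ℕ} [NeZero n] {M : Type*} [AddCommMonoid M]
    (g : ZMod n → M) : ∑ k ∈ Finset.range n, g k = ∑ m : ZMod n, g m :=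
  Finset.sum_nbij' (fun k => (k : ZMod n)) ZMod.val (fun _ _ => Finset.mem_univ _)
    (fun m _ => Finset.mem_range.mpr m.val_lt)
    (fun _ hk => ZMod.val_cast_of_lt (Finset.mem_range.mp hk)) (fun m _ => m.natCast_zmod_val)
    (fun _ _ => rfl)

namespace ZpFreeComplex

variable {p : ℕ} (X : ZpFreeComplex p)

instance (n : ℕ) : Fintype (X.F n) := X.fin n

@[simp]
lemma tCh_apply (n k : ℕ) (c : X.Ch n) (z : X.F n × ZMod p) :
    X.tCh n k c z = c (z.1, z.2 - k) :=
  rfl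

lemma sCh_apply [NeZero p] (n : ℕ) (c : X.Ch n) (z : X.F n × ZMod p) :
    X.sCh n c z = ∑ m : ZMod p, c (z.1, m) := by
  rw [sCh, AddMonoidHom.finsetSum_apply, Finset.sum_apply]
  simp only [tCh_apply]
  rw [ZMod.sum_range_natCast fun k => c (z.1, z.2 - k)]
  exact Fintype.sum_equiv (Equiv.subLeft z.2) _ _ fun _ => rfl

lemma sCh_dCh [NeZero p] (n : ℕ) (c : X.Ch n) : X.sCh n (X.dCh n c) = 0 := by
  funext z
  simp only [dCh, AddMonoidHom.sub_apply, AddMonoidHom.id_apply, Pi.sub_apply, sCh_apply,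
    tCh_apply, Nat.cast_one, Pi.zero_apply, Finset.sum_sub_distrib, sub_eq_zero]
  exact (Fintype.sum_equiv (Equiv.subRight (1 : ZMod p)) _ _ fun _ => rfl).symm

/-- The `ℤ`-span of the fundamental domain: `t^k σ` is the basis vector at `(σ, k)`. -/
def fundSpan (n : ℕ) : AddSubgroup (X.Ch n) where
  carrier := {c | ∀ σ k, k ≠ 0 → c (σ, k) = 0}
  add_mem' ha hb σ k hk := by simp [ha σ k hk, hb σ k hk]
  zero_mem' _ _ _ := rfl
  neg_mem' ha σ k hk := by simp [ha σ k hk]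

def fundProj (n : ℕ) : X.Ch n →+ X.Ch n where
  toFun c z := if z.2 = 0 then c z else 0
  map_zero' := by funext z; simp
  map_add' a b := by funext z; by_cases hz : z.2 = 0 <;> simp [hz]

lemma fundProj_mem (n : ℕ) (c : X.Ch n) : X.fundProj n c ∈ X.fundSpan n :=
  fun _ _ hk => if_neg hk

variable {X}

lemma sCh_apply_of_mem_fundSpan [NeZero p] {n : ℕ} {c : X.Ch n} (hc : c ∈ X.fundSpan n)
    (z : X.F n × ZMod p) : X.sCh n c z = c (z.1, 0) := by
  rw [sCh_apply]
  exact Finset.sum_eq_single 0 (fun m _ hm => hc _ m hm) (by simp)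

lemma sCh_fundProj_sCh [NeZero p] (n : ℕ) (x : X.Ch n) :
    X.sCh n (X.fundProj n (X.sCh n x)) = X.sCh n x := by
  funext z
  rw [sCh_apply_of_mem_fundSpan (X.fundProj_mem _ _)]
  simp [fundProj, sCh_apply]

lemma apply_tCh_of_dCo_eq_zero {n : ℕ} {ψ : X.Co n} (hψ : X.dCo n ψ = 0) (k : ℕ)
    (x : X.Ch n) : ψ (X.tCh n k x) = ψ x := by
  have ht : ∀ y, ψ (X.tCh n 1 y) = ψ y := fun y => by
    have hy : ψ (y - X.tCh n 1 y) = 0 := DFunLike.congr_fun hψ y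
    rwa [map_sub, sub_eq_zero, eq_comm] at hy
  induction k with
  | zero => rw [tCh_zero]
  | succ k ih => rw [tCh_succ, ht, ih]

lemma apply_sCh_of_dCo_eq_zero {n : ℕ} {ψ : X.Co n} (hψ : X.dCo n ψ = 0) (x : X.Ch n) :
    ψ (X.sCh n x) = p • ψ x := by
  simp only [sCh, AddMonoidHom.finsetSum_apply, map_sum, apply_tCh_of_dCo_eq_zero hψ,
    Finset.sum_const, Finset.card_range]

lemma apply_eq_apply_fundProj_sCh [NeZero p] {n : ℕ} {ψ : X.Co n} (hψ : X.dCo n ψ = 0)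
    (x : X.Ch n) : ψ x = ψ (X.fundProj n (X.sCh n x)) := by
  have h := apply_sCh_of_dCo_eq_zero hψ (X.fundProj n (X.sCh n x))
  rw [sCh_fundProj_sCh, apply_sCh_of_dCo_eq_zero hψ, nsmul_eq_mul, nsmul_eq_mul] at h
  exact mul_left_cancel₀ (Nat.cast_ne_zero.mpr (NeZero.ne p)) h

lemma ext_of_dCo_eq_zero [NeZero p] {n : ℕ} {ψ₁ ψ₂ : X.Co n} (hψ₁ : X.dCo n ψ₁ = 0)
    (hψ₂ : X.dCo n ψ₂ = 0) (h : ∀ c ∈ X.fundSpan n, ψ₁ c = ψ₂ c) : ψ₁ = ψ₂ :=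
  AddMonoidHom.ext fun x => by
    rw [apply_eq_apply_fundProj_sCh hψ₁, apply_eq_apply_fundProj_sCh hψ₂,
      h _ (X.fundProj_mem _ _)]

lemma apply_eq_zero_of_supports_disjoint [NeZero p] {n : ℕ} [DecidableEq (X.F n)]
    {φ : X.Co n} (hφ : ∀ (σ : X.F n) (k : ZMod p), k ≠ 0 → φ (Pi.single (σ, k) (1 : ℤ)) = 0)
    {y : X.Ch n} (hy : ∀ σ, y (σ, 0) = 0) : φ y = 0 := by
  rw [← Finset.univ_sum_single y, map_sum]
  refine Finset.sum_eq_zero fun ⟨σ, k⟩ _ => ?_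
  by_cases hk : k = 0
  · rw [hk, hy, Pi.single_zero, map_zero]
  · rw [← mul_one (y (σ, k)), ← smul_eq_mul, Pi.single_smul', map_zsmul, hφ σ k hk, smul_zero]

lemma apply_sCh_of_mem_fundSpan [NeZero p] {n : ℕ} [DecidableEq (X.F n)] {φ : X.Co n}
    (hφ : ∀ (σ : X.F n) (k : ZMod p), k ≠ 0 → φ (Pi.single (σ, k) (1 : ℤ)) = 0)
    {c : X.Ch n} (hc : c ∈ X.fundSpan n) : φ (X.sCh n c) = φ c := by
  rw [← sub_eq_zero, ← map_sub]
  exact apply_eq_zero_of_supports_disjoint hφ fun σ => by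
    rw [Pi.sub_apply, sCh_apply_of_mem_fundSpan hc, sub_self]

lemma clsd_eq_zero_iff {n : ℕ} {α : X.Co n} (hα : α ∈ X.dcocycles n) :
    X.clsd n α hα = 0 ↔ α ∈ X.dcobds n :=
  (QuotientAddGroup.eq_zero_iff _).trans AddSubgroup.mem_addSubgroupOf

lemma nsmul_clsd {n : ℕ} {α : X.Co n} (hα : α ∈ X.dcocycles n) (k : ℕ) :
    k • X.clsd n α hα = X.clsd n (k • α) (nsmul_mem hα k) :=
  (QuotientAddGroup.mk_nsmul _ _ _).symm

lemma dvd_apply_of_mem_dcobds [NeZero p] {i n : ℕ} {α : X.Co i} (hα : α ∈ X.dcobds i)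
    {c : X.Ch i} {w : X.Ch (i - 1)} (hw : X.sCh (i - 1) (X.bdFrom i c) = (n : ℤ) • w) :
    (n : ℤ) ∣ α c := by
  cases i with
  | zero =>
    rw [AddSubgroup.mem_bot.mp hα]
    exact dvd_zero _
  | succ j =>
    obtain ⟨ψ, hψ, rfl⟩ := hα
    change X.sCh j (X.bd j c) = (n : ℤ) • w at hw
    change (n : ℤ) ∣ ψ (X.bd j c)
    rw [apply_eq_apply_fundProj_sCh hψ, hw, map_zsmul, map_zsmul, smul_eq_mul]
    exact dvd_mul_right _ _

lemma mem_dcobds_of_forall_dvd [NeZero p] {i : ℕ} {α : X.Co i} (hα : X.dCo i α = 0)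
    (hdvd : ∀ (n : ℕ), ∀ c ∈ X.fundSpan i, ∀ w : X.Ch (i - 1),
      X.sCh (i - 1) (X.bdFrom i c) = (n : ℤ) • w → (n : ℤ) ∣ α c) :
    α ∈ X.dcobds i := by
  cases i with
  | zero =>
    refine AddSubgroup.mem_bot.mpr (ext_of_dCo_eq_zero hα (map_zero _) fun c hc => ?_)
    exact zero_dvd_iff.mp (hdvd 0 c hc 0 (by simp [bdFrom]))
  | succ j =>
    let S := X.fundSpan (j + 1)
    obtain ⟨θ, hθ⟩ := AddMonoidHom.exists_comp_eq_of_forall_dvd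
      ((X.sCh j).comp ((X.bd j).comp S.subtype)) (α.comp S.subtype)
      fun n c w hw => hdvd n c c.2 w hw
    have hψ : X.dCo j (θ.comp (X.sCh j)) = 0 := AddMonoidHom.ext fun x =>
      (congrArg θ (X.sCh_dCh j x)).trans (map_zero θ)
    refine ⟨θ.comp (X.sCh j), hψ, ext_of_dCo_eq_zero ?_ hα fun c hc => ?_⟩
    · rw [← cb_dCo, hψ, map_zero]
    · exact DFunLike.congr_fun hθ ⟨c, hc⟩

end ZpFreeComplex

/-- **Certificate for a non-trivial `d`-cohomology class.**
Let `K` be a `ℤ_p`-chain complex with fundamental-domain bases (degree-`n` chain group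
free on `{t^k σ : σ ∈ F_n, 0 ≤ k ≤ p−1}`, modelled as `F n × ZMod p → ℤ` with `t`
cyclically shifting the second coordinate).  Let `h ∈ H^i_d(K)` be a torsion
`d`-cohomology class with `h = [sφ]_d`, where `sφ` is a cocycle of `C*_d` and `φ`
vanishes on `t^k σ` for all `σ ∈ F_i`, `1 ≤ k ≤ p−1`.  Then `h ≠ 0` iff there are an
integer `n ≥ 2` and a chain `c` in the ℤ-span of `F_i` with `s ∂c ∈ n·C_{i−1}` and
`φ(c)` not divisible by `n`; moreover for such `c` one has `φ(sc) = φ(c)`. -/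
theorem certificate_for_nontrivial_d_class
    (p : ℕ) (hp : p.Prime) (X : ZpFreeComplex p) [∀ n, DecidableEq (X.F n)]
    (i : ℕ) (φ : X.Co i)
    (hsupp : ∀ (σ : X.F i) (k : ZMod p), k ≠ 0 → φ (Pi.single (σ, k) (1 : ℤ)) = 0)
    (hmem : X.sCo i φ ∈ X.dcocycles i)
    (h : X.Hd i) (hrep : X.clsd i (X.sCo i φ) hmem = h)
    (htor : ∃ k : ℕ, 1 ≤ k ∧ k • h = 0) :
    (h ≠ 0 ↔
      ∃ n : ℕ, 2 ≤ n ∧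
        ∃ c : X.Ch i,
          (∀ (σ : X.F i) (k : ZMod p), k ≠ 0 → c (σ, k) = 0) ∧
          (∃ w : X.Ch (i - 1), X.sCh (i - 1) (X.bdFrom i c) = (n : ℤ) • w) ∧
          ¬ ((n : ℤ) ∣ φ c))
    ∧ (∀ c : X.Ch i,
        (∀ (σ : X.F i) (k : ZMod p), k ≠ 0 → c (σ, k) = 0) →
        φ (X.sCh i c) = φ c) := by
  have : NeZero p := ⟨hp.ne_zero⟩
  have hφ : ∀ c ∈ X.fundSpan i, X.sCo i φ c = φ c := fun c hc =>
    apply_sCh_of_mem_fundSpan hsupp hc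
  have hh : h = 0 ↔ X.sCo i φ ∈ X.dcobds i := by rw [← hrep, clsd_eq_zero_iff]
  obtain ⟨k, hk, hkh⟩ := htor
  have hkφ : k • X.sCo i φ ∈ X.dcobds i := by
    rw [← clsd_eq_zero_iff (nsmul_mem hmem k), ← nsmul_clsd hmem, hrep, hkh]
  refine ⟨⟨fun hne => ?_, ?_⟩, fun c hc => apply_sCh_of_mem_fundSpan hsupp hc⟩
  · by_contra! hno
    refine hne (hh.2 (mem_dcobds_of_forall_dvd hmem.1 fun n c hc w hw => ?_))
    match n with
    | 0 =>
      have hkc : k • X.sCo i φ c = 0 := zero_dvd_iff.mp (dvd_apply_of_mem_dcobds hkφ hw)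
      rw [Nat.cast_zero, zero_dvd_iff]
      exact (smul_eq_zero.mp hkc).resolve_left (by omega)
    | 1 => exact Nat.cast_one (R := ℤ) ▸ one_dvd _
    | n + 2 => exact hφ c hc ▸ hno (n + 2) (by omega) c hc ⟨w, hw⟩
  · rintro ⟨n, -, c, hc, ⟨w, hw⟩, hndvd⟩ hzero
    exact hndvd (hφ c hc ▸ dvd_apply_of_mem_dcobds (hh.1 hzero) hw)
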